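/- Let C_n be the cycle on n ≥ 3 vertices and let f be any weak IASI of C_n. If n is odd, then the number of mono-indexed edges of C_n under f is odd; if n is even, then the number of mono-indexed edges of C_n under f is even. -/

import Mathlib

open Finset SimpleGraph
open scoped Pointwise

/-- `f` is a weak integer additive set-indexer (weak IASI) of the simple graph `G`:
an injective assignment of nonempty finite sets of non-negative integers to vertices
whose induced sumset-labeling of edges is injective, and such that the set-indexing
number of every edge equals the maximum of those of its end vertices. -/
structure IsWeakIASI {V : Type*} (G : SimpleGraph V) (f : V → Finset ℕ) : Prop where
  nonempty : ∀ v : V, (f v).Nonempty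
  injective : Function.Injective f
  edgeInjective : ∀ ⦃u v x y : V⦄, G.Adj u v → G.Adj x y →
    f u + f v = f x + f y → s(u, v) = s(x, y)
  weak : ∀ ⦃u v : V⦄, G.Adj u v → (f u + f v).card = max (f u).card (f v).card

open scoped Classical in
/-- The number of mono-indexed edges of `G` under the vertex labeling `f`, i.e. the
number of edges both of whose end vertices receive singleton set-labels. -/
noncomputable def monoEdgeCount {V : Type*} [Fintype V] (G : SimpleGraph V)
    (f : V → Finset ℕ) : ℕ :=
  (G.edgeFinset.filter fun e => ∀ v ∈ e, (f v).card = 1).card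

/-- The set of numbers of mono-indexed edges over all weak IASIs of `G`; the sparing
number of `G` is the least element of this set. -/
noncomputable def monoCounts {V : Type*} [Fintype V] (G : SimpleGraph V) : Set ℕ :=
  {k : ℕ | ∃ f : V → Finset ℕ, IsWeakIASI G f ∧ monoEdgeCount G f = k}

/-!
By Cauchy–Davenport, `|A + B| ≥ |A| + |B| - 1` for nonempty `A, B ⊆ ℕ`, so the weak condition
`|A + B| = max |A| |B|` forces one end of every edge to carry a singleton label: the vertices with
non-singleton labels form an independent set. In a `d`-regular graph each of them then lies on
exactly `d` edges, and no edge is counted twice, so the number of mono-indexed edges is the number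
of edges minus `d` times the number of such vertices. For `Cₙ`, `d = 2` and there are `n` edges.
-/

namespace SimpleGraph

variable {V : Type*} [Fintype V] [DecidableEq V] (G : SimpleGraph V) [DecidableRel G.Adj]

open scoped Classical in
/-- The incidence sets of the vertices of the independent set `{v | ¬ p v}` partition the edges
not contained in `{v | p v}`. -/
theorem card_edgeFinset_eq_card_filter_add_sum_degree (p : V → Prop) [DecidablePred p]
    (h : ∀ ⦃u v⦄, G.Adj u v → p u ∨ p v) :
    #G.edgeFinset = #{e ∈ G.edgeFinset | ∀ v ∈ e, p v} + ∑ v with ¬ p v, G.degree v := by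
  have hbiUnion : {e ∈ G.edgeFinset | ¬ ∀ v ∈ e, p v} =
      ({v | ¬ p v} : Finset V).biUnion fun v => G.incidenceFinset v := by
    ext e
    induction e using Sym2.ind with
    | _ u w =>
      simp only [incidenceFinset_eq_filter, mem_filter, mem_biUnion, mem_univ, true_and,
        mem_edgeFinset, mem_edgeSet, Sym2.mem_iff]
      grind
  have hdisj : (({v | ¬ p v} : Finset V) : Set V).PairwiseDisjoint
      fun v => G.incidenceFinset v := by
    intro u hu w hw huw
    have hnadj : ¬ G.Adj u w := fun hadj =>
      (h hadj).elim (mem_filter.mp (mem_coe.mp hu)).2 (mem_filter.mp (mem_coe.mp hw)).2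
    rw [Function.onFun, ← disjoint_coe, coe_incidenceFinset, coe_incidenceFinset,
      Set.disjoint_iff_inter_eq_empty]
    exact G.incidenceSet_inter_incidenceSet_of_not_adj hnadj huw
  rw [← card_filter_add_card_filter_not (fun e => ∀ v ∈ e, p v), hbiUnion,
    card_biUnion hdisj]
  simp only [card_incidenceFinset_eq_degree]

variable {G} in
open scoped Classical in
theorem IsRegularOfDegree.card_edgeFinset_eq {d : ℕ} (hG : G.IsRegularOfDegree d)
    (p : V → Prop) [DecidablePred p]
    (h : ∀ ⦃u v⦄, G.Adj u v → p u ∨ p v) :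
    #G.edgeFinset = #{e ∈ G.edgeFinset | ∀ v ∈ e, p v} + d * #{v | ¬ p v} := by
  rw [G.card_edgeFinset_eq_card_filter_add_sum_degree p h,
    sum_congr rfl fun v _ => hG.degree_eq v, sum_const, smul_eq_mul, mul_comm]

theorem cycleGraph_isRegularOfDegree_two (n : ℕ) : (cycleGraph (n + 3)).IsRegularOfDegree 2 :=
  fun _ => cycleGraph_degree_three_le

theorem card_edgeFinset_cycleGraph (n : ℕ) : #(cycleGraph (n + 3)).edgeFinset = n + 3 := by
  have := (cycleGraph (n + 3)).sum_degrees_eq_twice_card_edges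
  simp only [(cycleGraph_isRegularOfDegree_two n).degree_eq, sum_const, card_univ,
    Fintype.card_fin, smul_eq_mul] at this
  omega

end SimpleGraph

theorem IsWeakIASI.card_eq_one_or_card_eq_one {V : Type*} {G : SimpleGraph V} {f : V → Finset ℕ}
    (hf : IsWeakIASI G f) {u v : V} (h : G.Adj u v) : (f u).card = 1 ∨ (f v).card = 1 := by
  have hcd := cauchy_davenport_add_of_linearOrder_isCancelAdd (hf.nonempty u) (hf.nonempty v)
  rw [hf.weak h] at hcd
  have := (hf.nonempty u).card_pos
  have := (hf.nonempty v).card_pos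
  omega

theorem IsWeakIASI.monoEdgeCount_add_mul_card {V : Type*} [Fintype V] [DecidableEq V]
    {G : SimpleGraph V} [DecidableRel G.Adj] {f : V → Finset ℕ} (hf : IsWeakIASI G f) {d : ℕ}
    (hG : G.IsRegularOfDegree d) :
    monoEdgeCount G f + d * #{v | (f v).card ≠ 1} = #G.edgeFinset := by
  rw [hG.card_edgeFinset_eq (fun v => (f v).card = 1) fun _ _ => hf.card_eq_one_or_card_eq_one,
    monoEdgeCount]
  -- the two sides differ only in their decidability instances
  convert rfl

/-- For any weak IASI of the cycle `Cₙ` (`n ≥ 3`), the number of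
mono-indexed edges is odd when `n` is odd and even when `n` is even. -/
theorem monoEdgeCount_parity_cycle (n : ℕ) (hn : 3 ≤ n)
    (f : Fin n → Finset ℕ) (hf : IsWeakIASI (cycleGraph n) f) :
    (Odd n → Odd (monoEdgeCount (cycleGraph n) f)) ∧
      (Even n → Even (monoEdgeCount (cycleGraph n) f)) := by
  obtain ⟨m, rfl⟩ : ∃ m, n = m + 3 := ⟨n - 3, by omega⟩
  have hcount := hf.monoEdgeCount_add_mul_card (cycleGraph_isRegularOfDegree_two m)
  rw [card_edgeFinset_cycleGraph] at hcount
  constructor <;> rintro ⟨k, hk⟩ <;> exact ⟨k - #{v | (f v).card ≠ 1}, by omega⟩
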